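/- arXiv:1911.04134 — 2 statements merged into one kernel-verified Lean document; each statement's English description precedes it below -/
import Mathlib

section
/- Let A be a unital *-algebra, X an A-bimodule equipped with an A-bimodule involution, d : A → X a *-derivation, and ξ ∈ X an element satisfying d([a,b]) + [a,b]ξ + ξ*[a,b] = 0 for all a,b ∈ A. Define T(a) = d(a) + aξ. Then T is r-*-anti-derivable at zero: whenever a,b ∈ A satisfy ab* = 0, we have T(b)*a + b*T(a) = 0. -/
/-! Expanding with the Leibniz rule and `d (b*) = d(b)*`, the expression
`T(b)* a + b* T(a)` equals `d(b* a) + (b* a) ξ + ξ* (b* a)`. When `a b* = 0` the element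
`b* a` is the commutator `[b*, a]`, so this vanishes by the hypothesis on `ξ`. -/

open MulOpposite

section

variable {A X : Type*} [Ring A] [AddCommGroup X] [Module A X] [Module Aᵐᵒᵖ X]

theorem op_smul_star_add_star_smul_eq [StarRing A] [StarAddMonoid X]
    (hst : ∀ (a : A) (x : X), star (a • x) = op (star a) • star x)
    (d : A →+ X) (hder : ∀ a b : A, d (a * b) = op b • d a + a • d b)
    (hstar : ∀ a : A, d (star a) = star (d a)) (ξ : X) (a b : A) :
    op a • star (d b + b • ξ) + star b • (d a + a • ξ)
      = d (star b * a) + (star b * a) • ξ + op (star b * a) • star ξ := by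
  rw [star_add, ← hstar, hst, smul_add, smul_add, smul_smul, smul_smul, ← op_mul, hder]
  abel

theorem map_mul_add_smul_add_op_smul_eq_zero_of_mul_eq_zero [Star X] (d : A →+ X) (ξ : X)
    (hξ : ∀ a b : A, d (a * b - b * a) + (a * b - b * a) • ξ
      + op (a * b - b * a) • star ξ = 0)
    {a c : A} (hac : a * c = 0) :
    d (c * a) + (c * a) • ξ + op (c * a) • star ξ = 0 := by
  have h := hξ a c
  rwa [hac, zero_sub, map_neg, neg_smul, op_neg, neg_smul, ← neg_add, ← neg_add,
    neg_eq_zero] at h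

end

theorem stmt_6_general {A X : Type*} [Ring A] [StarRing A] [AddCommGroup X] [StarAddMonoid X]
    [Module A X] [Module Aᵐᵒᵖ X]
    (hst₁ : ∀ (a : A) (x : X), star (a • x) = MulOpposite.op (star a) • star x)
    (d : A →+ X)
    (hder : ∀ a b : A, d (a * b) = MulOpposite.op b • d a + a • d b)
    (hstar : ∀ a : A, d (star a) = star (d a))
    (ξ : X)
    (hξ : ∀ a b : A, d (a * b - b * a) + (a * b - b * a) • ξ
      + MulOpposite.op (a * b - b * a) • star ξ = 0) :
    ∀ a b : A, a * star b = 0 →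
      MulOpposite.op a • star (d b + b • ξ) + star b • (d a + a • ξ) = 0 := by
  intro a b hab
  rw [op_smul_star_add_star_smul_eq hst₁ d hder hstar ξ a b]
  exact map_mul_add_smul_add_op_smul_eq_zero_of_mul_eq_zero d ξ hξ hab

/-- If `d` is a `*`-derivation and `ξ ∈ X` satisfies
`d([a,b]) + [a,b]ξ + ξ*[a,b] = 0`, then `T a = d a + a ξ` is r-`*`-anti-derivable at zero. -/
theorem stmt_6 {A X : Type*} [Ring A] [StarRing A] [AddCommGroup X] [StarAddMonoid X]
    [Module A X] [Module Aᵐᵒᵖ X] [SMulCommClass A Aᵐᵒᵖ X]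
    (hst₁ : ∀ (a : A) (x : X), star (a • x) = MulOpposite.op (star a) • star x)
    (hst₂ : ∀ (a : A) (x : X), star (MulOpposite.op a • x) = star a • star x)
    (d : A →+ X)
    (hder : ∀ a b : A, d (a * b) = MulOpposite.op b • d a + a • d b)
    (hstar : ∀ a : A, d (star a) = star (d a))
    (ξ : X)
    (hξ : ∀ a b : A, d (a * b - b * a) + (a * b - b * a) • ξ
      + MulOpposite.op (a * b - b * a) • star ξ = 0) :
    ∀ a b : A, a * star b = 0 →
      MulOpposite.op a • star (d b + b • ξ) + star b • (d a + a • ξ) = 0 :=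
  stmt_6_general hst₁ d hder hstar ξ hξ
end

section
/- Let A be a unital *-algebra, X an A-bimodule with an A-bimodule involution, d : A → X a *-derivation and ξ ∈ X with d([a,b]) + [a,b]ξ + ξ*[a,b] = 0 for all a,b ∈ A. Define T(a) = d(a) + aξ. Then for a,b ∈ A with ab* = 0, one has T(b)*a + b*T(a) = d([b*,a]) + ξ*[b*,a] + [b*,a]ξ, and hence T(b)*a + b*T(a) = 0. -/
/-!
Since `T(b)* = d(b*) + ξ* b*`, expanding `T(b)* a + b* T(a)` and comparing with the Leibniz rule
for `d(b* a)` gives the identity, once `a b* = 0` is used to replace `b* a` by `[b*, a]`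
(and `d(a b*) = 0`). The right-hand side then vanishes by the hypothesis on `ξ` for the pair
`(b*, a)`.
-/

section StarDerivation

variable {A X : Type*} [Ring A] [AddCommGroup X] [Module A X] [Module Aᵐᵒᵖ X]

lemma star_map_add_smul [StarRing A] [StarAddMonoid X]
    (hst : ∀ (a : A) (x : X), star (a • x) = MulOpposite.op (star a) • star x)
    (d : A →+ X) (hstar : ∀ a : A, d (star a) = star (d a)) (b : A) (ξ : X) :
    star (d b + b • ξ) = d (star b) + MulOpposite.op (star b) • star ξ := by
  rw [star_add, hst, hstar]

lemma smul_map_add_smul_eq_of_mul_eq_zero (d : A →+ X)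
    (hder : ∀ a b : A, d (a * b) = MulOpposite.op b • d a + a • d b)
    {a c : A} (hac : a * c = 0) (ξ η : X) :
    MulOpposite.op a • (d c + MulOpposite.op c • η) + c • (d a + a • ξ) =
      d (c * a - a * c) + MulOpposite.op (c * a - a * c) • η + (c * a - a * c) • ξ := by
  rw [hac, sub_zero, hder, smul_add, smul_add, smul_smul, smul_smul, ← MulOpposite.op_mul]
  abel

end StarDerivation

theorem stmt_17_general {A X : Type*} [Ring A] [StarRing A] [AddCommGroup X] [StarAddMonoid X]
    [Module A X] [Module Aᵐᵒᵖ X] [SMulCommClass A Aᵐᵒᵖ X]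
    (hst₁ : ∀ (a : A) (x : X), star (a • x) = MulOpposite.op (star a) • star x)
    (d : A →+ X)
    (hder : ∀ a b : A, d (a * b) = MulOpposite.op b • d a + a • d b)
    (hstar : ∀ a : A, d (star a) = star (d a))
    (ξ : X)
    (hξ : ∀ a b : A, d (a * b - b * a) + (a * b - b * a) • ξ
      + MulOpposite.op (a * b - b * a) • star ξ = 0) :
    ∀ a b : A, a * star b = 0 →
      (MulOpposite.op a • star (d b + b • ξ) + star b • (d a + a • ξ) =
        d (star b * a - a * star b)
          + MulOpposite.op (star b * a - a * star b) • star ξ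
          + (star b * a - a * star b) • ξ) ∧
      MulOpposite.op a • star (d b + b • ξ) + star b • (d a + a • ξ) = 0 := by
  intro a b hab
  have hidentity := smul_map_add_smul_eq_of_mul_eq_zero d hder hab ξ (star ξ)
  rw [← star_map_add_smul hst₁ d hstar] at hidentity
  refine ⟨hidentity, ?_⟩
  rw [hidentity, ← hξ (star b) a]
  abel

/-- If `d` is a `*`-derivation and `ξ` satisfies `d([a,b]) + [a,b]ξ + ξ*[a,b] = 0` for all
`a, b`, then for `T a = d a + a ξ` and `a b* = 0` one has
`T(b)* a + b* T(a) = d([b*,a]) + ξ*[b*,a] + [b*,a]ξ`, and hence `T(b)* a + b* T(a) = 0`. -/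
theorem stmt_17 {A X : Type*} [Ring A] [StarRing A] [AddCommGroup X] [StarAddMonoid X]
    [Module A X] [Module Aᵐᵒᵖ X] [SMulCommClass A Aᵐᵒᵖ X]
    (hst₁ : ∀ (a : A) (x : X), star (a • x) = MulOpposite.op (star a) • star x)
    (hst₂ : ∀ (a : A) (x : X), star (MulOpposite.op a • x) = star a • star x)
    (d : A →+ X)
    (hder : ∀ a b : A, d (a * b) = MulOpposite.op b • d a + a • d b)
    (hstar : ∀ a : A, d (star a) = star (d a))
    (ξ : X)
    (hξ : ∀ a b : A, d (a * b - b * a) + (a * b - b * a) • ξ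
      + MulOpposite.op (a * b - b * a) • star ξ = 0) :
    ∀ a b : A, a * star b = 0 →
      (MulOpposite.op a • star (d b + b • ξ) + star b • (d a + a • ξ) =
        d (star b * a - a * star b)
          + MulOpposite.op (star b * a - a * star b) • star ξ
          + (star b * a - a * star b) • ξ) ∧
      MulOpposite.op a • star (d b + b • ξ) + star b • (d a + a • ξ) = 0 :=
  stmt_17_general hst₁ d hder hstar ξ hξ
end
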